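/- Suppose the integral service rate region of a linear [n,k]_q code (with unit server rates) contains every vector λ ∈ ℤ_{≥0}^k with Σ_i λ_i = t. Then for every multiset {i_1,…,i_t} of indices from [k], there exist t pairwise disjoint subsets T_1,…,T_t of column indices of the generator matrix G such that for each j, some linear combination of the columns of G indexed by T_j equals the standard basis vector e_{i_j}; i.e., G is an [n,k,t]_q multiset primitive batch code. -/

import Mathlib

open Finset


/-- `T` is a recovery set for file `i`: some linear combination with nonzero
coefficients of the columns of `G` indexed by `T` equals `e_i`. -/
def IsRecoverySet (F : Type) [Field F] (k n : ℕ) (G : Matrix (Fin k) (Fin n) F)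
    (i : Fin k) (T : Finset (Fin n)) : Prop :=
  ∃ c : Fin n → F, (∀ l ∈ T, c l ≠ 0) ∧
    (∑ l ∈ T, c l • (fun r => G r l)) = Pi.single i 1

/-- `lam` is in the integral service rate region of the code generated by `G`
with unit server rates. -/
def IntServableCode (F : Type) [Field F] (k n : ℕ) (G : Matrix (Fin k) (Fin n) F)
    (lam : Fin k → ℕ) : Prop :=
  ∃ w : Fin k → Finset (Fin n) → ℕ,
    (∀ i T, w i T ≠ 0 → IsRecoverySet F k n G i T) ∧
    (∀ i, ∑ T : Finset (Fin n), w i T = lam i) ∧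
    ∀ l : Fin n, (∑ i, ∑ T ∈ Finset.univ.filter (fun T : Finset (Fin n) => l ∈ T), w i T) ≤ 1

/-
Take `λ_i` to be the number of positions `j` with `f j = i`. Every recovery set is nonempty
(as `e_i ≠ 0`) and every server has capacity one, so in an integral allocation serving `λ` each
used pair (file, recovery set) is used exactly once and two distinct used pairs share no server.
File `i` therefore has exactly `λ_i` used recovery sets, pairwise disjoint from all other used
sets, and these can be handed out injectively to the positions `j` with `f j = i`.
-/

namespace Finset

variable {β : Type*}

theorem eq_of_sum_le_one {s : Finset β} {w : β → ℕ} (h : ∑ b ∈ s, w b ≤ 1) {a b : β}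
    (ha : a ∈ s) (hb : b ∈ s) (wa : w a ≠ 0) (wb : w b ≠ 0) : a = b := by
  classical
  by_contra hab
  have hpair : ∑ x ∈ {a, b}, w x ≤ ∑ x ∈ s, w x :=
    sum_le_sum_of_subset (insert_subset ha (singleton_subset_iff.2 hb))
  rw [sum_pair hab] at hpair
  omega

end Finset

theorem Function.exists_injective_on_fibers_of_card_le {α ι β : Type*} [Fintype α]
    [DecidableEq ι] (f : α → ι) (S : ι → Finset β) (h : ∀ i, #{j | f j = i} ≤ #(S i)) :
    ∃ g : α → β, (∀ j, g j ∈ S (f j)) ∧ ∀ j j', f j = f j' → g j = g j' → j = j' := by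
  have e : ∀ i, {j // f j = i} ↪ S i := fun i =>
    (Function.Embedding.nonempty_of_card_le (by simpa [Fintype.card_subtype] using h i)).some
  let φ : α ↪ Σ i, S i := (Equiv.sigmaFiberEquiv f).symm.toEmbedding.trans
    (Function.Embedding.sigmaMap (Function.Embedding.refl ι) e)
  exact ⟨fun j => (φ j).2, fun j => (φ j).2.2,
    fun j j' hf hg => φ.injective (Sigma.subtype_ext hf hg)⟩

theorem IsRecoverySet.nonempty {F : Type} [Field F] {k n : ℕ} {G : Matrix (Fin k) (Fin n) F}
    {i : Fin k} {T : Finset (Fin n)} (hT : IsRecoverySet F k n G i T) : T.Nonempty := by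
  rw [Finset.nonempty_iff_ne_empty]
  rintro rfl
  obtain ⟨c, -, hc⟩ := hT
  simpa using congrFun hc i

section Load

variable {ι α : Type*} [Fintype ι] [Fintype α] [DecidableEq α] {w : ι → Finset α → ℕ}
  (hload : ∀ l, ∑ i, ∑ T ∈ univ.filter (fun T : Finset α => l ∈ T), w i T ≤ 1)
include hload

theorem eq_of_mem_of_weight_ne_zero {i i' : ι} {T T' : Finset α} {l : α} (hl : l ∈ T)
    (hl' : l ∈ T') (hw : w i T ≠ 0) (hw' : w i' T' ≠ 0) : (i, T) = (i', T') := by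
  have hpairs : ∑ p ∈ univ.filter (fun p : ι × Finset α => l ∈ p.2), w p.1 p.2 ≤ 1 := by
    simpa only [sum_filter, Fintype.sum_prod_type] using hload l
  exact eq_of_sum_le_one hpairs (by simpa using hl) (by simpa using hl') hw hw'

theorem disjoint_of_weight_ne_zero {i i' : ι} {T T' : Finset α} (hw : w i T ≠ 0)
    (hw' : w i' T' ≠ 0) (hne : (i, T) ≠ (i', T')) : Disjoint T T' :=
  disjoint_left.2 fun _ hl hl' => hne (eq_of_mem_of_weight_ne_zero hload hl hl' hw hw')

theorem weight_le_one {i : ι} {T : Finset α} (hT : T.Nonempty) : w i T ≤ 1 := by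
  obtain ⟨l, hl⟩ := hT
  calc w i T ≤ ∑ T' ∈ univ.filter (fun T' : Finset α => l ∈ T'), w i T' :=
        Finset.single_le_sum (fun _ _ => Nat.zero_le _) (by simpa using hl)
    _ ≤ ∑ i', ∑ T' ∈ univ.filter (fun T' : Finset α => l ∈ T'), w i' T' :=
        Finset.single_le_sum (f := fun i' => ∑ T' ∈ univ.filter (l ∈ ·), w i' T')
          (fun _ _ => Nat.zero_le _) (Finset.mem_univ i)
    _ ≤ 1 := hload l

theorem sum_weight_eq_card_support (hne : ∀ i T, w i T ≠ 0 → T.Nonempty) (i : ι) :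
    ∑ T, w i T = #{T | w i T ≠ 0} := by
  rw [card_filter]
  refine sum_congr rfl fun T _ => ?_
  by_cases h : w i T = 0
  · simp [h]
  · rw [if_pos h]
    exact le_antisymm (weight_le_one hload (hne i T h)) (Nat.one_le_iff_ne_zero.2 h)

end Load

theorem intServable_implies_batch_code (F : Type) [Field F] (k n τ : ℕ)
    (G : Matrix (Fin k) (Fin n) F)
    (h : ∀ lam : Fin k → ℕ, ∑ i, lam i = τ → IntServableCode F k n G lam) :
    ∀ f : Fin τ → Fin k, ∃ T : Fin τ → Finset (Fin n),
      (∀ j j', j ≠ j' → Disjoint (T j) (T j')) ∧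
      ∀ j, ∃ c : Fin n → F, (∑ l ∈ T j, c l • (fun r => G r l)) = Pi.single (f j) 1 := by
  intro f
  have hτ : ∑ i, #{j | f j = i} = τ := by
    simpa using (Finset.card_eq_sum_card_fiberwise (s := univ) (t := univ) (f := f)
      (fun j _ => Finset.mem_univ (f j))).symm
  obtain ⟨w, hrec, hdemand, hload⟩ := h _ hτ
  have hne : ∀ i T, w i T ≠ 0 → T.Nonempty := fun i T hw => (hrec i T hw).nonempty
  obtain ⟨T, hT, hinj⟩ := Function.exists_injective_on_fibers_of_card_le f
    (fun i => {T | w i T ≠ 0})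
    (fun i => (sum_weight_eq_card_support hload hne i ▸ hdemand i).ge)
  have hw : ∀ j, w (f j) (T j) ≠ 0 := fun j => by simpa using hT j
  refine ⟨T, fun j j' hjj' => disjoint_of_weight_ne_zero hload (hw j) (hw j') ?_, fun j => ?_⟩
  · intro hp
    obtain ⟨hf, hT⟩ := Prod.mk.inj hp
    exact hjj' (hinj j j' hf hT)
  · obtain ⟨c, -, hc⟩ := hrec (f j) (T j) (hw j)
    exact ⟨c, hc⟩
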